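/- arXiv:1508.07210 — 5 statements merged into one kernel-verified Lean document; each statement's English description precedes it below -/
import Mathlib

section
/- Let m ≤ n be positive integers with n ≥ 2, and let φ_1,…,φ_n be unit-norm vectors in ℝ^m. Then sqrt((n−m)/(m(n−1))) ≤ max_{i≠j} |⟨φ_i, φ_j⟩|. -/
private lemma sum4_comm {α β : Type*} [Fintype α] [Fintype β] (g : α → α → β → β → ℝ) :
    ∑ i, ∑ j, ∑ a, ∑ b, g i j a b = ∑ a, ∑ b, ∑ i, ∑ j, g i j a b := by
  have step1 : ∀ i : α, ∑ j, ∑ a : β, ∑ b : β, g i j a b = ∑ a, ∑ j, ∑ b, g i j a b :=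
    fun i => Finset.sum_comm
  simp_rw [step1]
  rw [Finset.sum_comm]
  have step2 : ∀ (a : β) (i : α), ∑ j, ∑ b, g i j a b = ∑ b, ∑ j, g i j a b :=
    fun a i => Finset.sum_comm
  simp_rw [step2]
  have step3 : ∀ a : β, ∑ i : α, ∑ b, ∑ j, g i j a b = ∑ b, ∑ i, ∑ j, g i j a b :=
    fun a => Finset.sum_comm
  simp_rw [step3]

/-- **Welch bound.** For `n` unit-norm vectors in `ℝ^m` (with `m ≤ n`, `n ≥ 2`),
the coherence `max_{i ≠ j} |⟨φ_i, φ_j⟩|` is at least `√((n-m)/(m(n-1)))`,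
expressed as: some off-diagonal pair attains at least the Welch bound. -/
theorem welch_bound (m n : ℕ) (hm : 0 < m) (hmn : m ≤ n) (hn : 2 ≤ n)
    (φ : Fin n → EuclideanSpace ℝ (Fin m)) (hunit : ∀ i, ‖φ i‖ = 1) :
    ∃ i j : Fin n, i ≠ j ∧
      Real.sqrt (((n : ℝ) - m) / (m * ((n : ℝ) - 1))) ≤ |(inner ℝ (φ i) (φ j) : ℝ)| := by
  classical
  set f : Fin n → Fin n → ℝ := fun i j => (inner ℝ (φ i) (φ j) : ℝ) with hf
  have hinner : ∀ i j, f i j = ∑ a, φ i a * φ j a := by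
    intro i j
    simp [hf, PiLp.inner_apply, RCLike.inner_apply, conj_trivial, mul_comm]
  have hdiag : ∀ i, f i i = 1 := by
    intro i
    show (inner ℝ (φ i) (φ i) : ℝ) = 1
    rw [real_inner_self_eq_norm_sq, hunit i]; norm_num
  set T : Fin m → Fin m → ℝ := fun a b => ∑ i, φ i a * φ i b with hT
  have h1 : ∑ i, ∑ j, (f i j)^2 = ∑ a, ∑ b, (T a b)^2 := by
    have lhs : ∑ i, ∑ j, (f i j)^2
        = ∑ i, ∑ j, ∑ a, ∑ b, (φ i a * φ j a) * (φ i b * φ j b) := by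
      apply Finset.sum_congr rfl; intro i _
      apply Finset.sum_congr rfl; intro j _
      rw [hinner, sq, Finset.sum_mul_sum]
    have rhs : ∑ a, ∑ b, (T a b)^2
        = ∑ a, ∑ b, ∑ i, ∑ j, (φ i a * φ i b) * (φ j a * φ j b) := by
      apply Finset.sum_congr rfl; intro a _
      apply Finset.sum_congr rfl; intro b _
      rw [hT]; rw [sq, Finset.sum_mul_sum]
    rw [lhs, rhs, sum4_comm]
    apply Finset.sum_congr rfl; intro a _
    apply Finset.sum_congr rfl; intro b _
    apply Finset.sum_congr rfl; intro i _
    apply Finset.sum_congr rfl; intro j _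
    ring
  have htr : ∑ a, T a a = (n : ℝ) := by
    have h2 : ∀ i : Fin n, ∑ a, φ i a * φ i a = 1 := by
      intro i
      have h := hinner i i
      rw [hdiag i] at h
      exact h.symm
    simp only [hT]
    rw [Finset.sum_comm]
    simp [h2]
  have hcs : (n : ℝ)^2 ≤ (m : ℝ) * ∑ a, ∑ b, (T a b)^2 := by
    have h2 : (∑ a, T a a)^2 ≤ ((Finset.univ : Finset (Fin m)).card : ℝ) * ∑ a, (T a a)^2 := by
      exact_mod_cast sq_sum_le_card_mul_sum_sq (s := (Finset.univ : Finset (Fin m))) (f := fun a => T a a)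
    rw [htr] at h2
    simp only [Finset.card_univ, Fintype.card_fin] at h2
    refine h2.trans (mul_le_mul_of_nonneg_left ?_ (by positivity))
    apply Finset.sum_le_sum
    intro a _
    exact Finset.single_le_sum (f := fun b => (T a b)^2) (fun b _ => sq_nonneg _) (Finset.mem_univ a)
  set S := (Finset.univ : Finset (Fin n)).offDiag with hS
  have hsplit : ∑ i, ∑ j, (f i j)^2 = (n : ℝ) + ∑ p ∈ S, (f p.1 p.2)^2 := by
    rw [← Finset.sum_product']
    have hU : (Finset.univ ×ˢ Finset.univ : Finset (Fin n × Fin n)) = Finset.univ := by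
      simp
    rw [hU]
    rw [← Finset.sum_filter_add_sum_filter_not Finset.univ
      (fun p : Fin n × Fin n => p.1 = p.2) (fun p => (f p.1 p.2)^2)]
    have hfe : Finset.filter (fun p : Fin n × Fin n => ¬ p.1 = p.2) Finset.univ = S := by
      ext p
      simp [hS, Finset.mem_offDiag]
    rw [hfe]
    congr 1
    rw [Finset.sum_filter, ← hU, Finset.sum_product]
    have h3 : ∀ i : Fin n, (∑ j, if i = j then (f i j)^2 else 0) = 1 := by
      intro i
      rw [Finset.sum_ite_eq Finset.univ i (fun j => (f i j)^2)]
      simp [hdiag i]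
    simp [h3]
  have hcard : (S.card : ℝ) = n * ((n : ℝ) - 1) := by
    rw [hS, Finset.offDiag_card]
    simp only [Finset.card_univ, Fintype.card_fin]
    rw [Nat.cast_sub (Nat.le_mul_of_pos_left n (by omega))]
    push_cast
    ring
  have hSne : S.Nonempty := by
    refine ⟨(⟨0, by omega⟩, ⟨1, by omega⟩), ?_⟩
    simp [hS, Finset.mem_offDiag, Fin.ext_iff]
  obtain ⟨p, hpS, hpmax⟩ := S.exists_max_image (fun p => (f p.1 p.2)^2) hSne
  have hsum_le : ∑ q ∈ S, (f q.1 q.2)^2 ≤ (S.card : ℝ) * (f p.1 p.2)^2 := by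
    calc ∑ q ∈ S, (f q.1 q.2)^2 ≤ ∑ _q ∈ S, (f p.1 p.2)^2 :=
          Finset.sum_le_sum fun q hq => hpmax q hq
      _ = (S.card : ℝ) * (f p.1 p.2)^2 := by rw [Finset.sum_const, nsmul_eq_mul]
  have hm' : (0:ℝ) < m := by exact_mod_cast hm
  have hn1 : (0:ℝ) < (n:ℝ) - 1 := by
    have : (2:ℝ) ≤ n := by exact_mod_cast hn
    linarith
  have hnpos : (0:ℝ) < n := by positivity
  have key : ((n : ℝ) - m) / (m * ((n : ℝ) - 1)) ≤ (f p.1 p.2)^2 := by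
    have hoff : (n:ℝ)^2 / m - n ≤ ∑ q ∈ S, (f q.1 q.2)^2 := by
      have h3 : (n:ℝ)^2 / m ≤ ∑ i, ∑ j, (f i j)^2 := by
        rw [div_le_iff₀ hm', mul_comm, h1]; exact hcs
      rw [hsplit] at h3
      linarith
    have hub : (n:ℝ)^2 / m - n ≤ (n * ((n:ℝ)-1)) * (f p.1 p.2)^2 := by
      rw [← hcard]; exact hoff.trans hsum_le
    rw [div_le_iff₀ (by positivity)]
    have h4 : ((n:ℝ)^2/m - n) * m ≤ (n * ((n:ℝ)-1)) * (f p.1 p.2)^2 * m :=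
      mul_le_mul_of_nonneg_right hub hm'.le
    have h5 : ((n:ℝ)^2/m - n) * m = (n:ℝ)^2 - n * m := by field_simp
    nlinarith [h4, h5, hnpos, sq_nonneg (f p.1 p.2)]
  refine ⟨p.1, p.2, ?_, ?_⟩
  · have := hpS; rw [hS, Finset.mem_offDiag] at this; exact this.2.2
  · calc Real.sqrt (((n : ℝ) - m) / (m * ((n : ℝ) - 1)))
        ≤ Real.sqrt ((f p.1 p.2)^2) := Real.sqrt_le_sqrt key
      _ = |f p.1 p.2| := Real.sqrt_sq_eq_abs _
end

section
/- Let m < n be positive integers and let φ_1,…,φ_n be unit-norm vectors in ℝ^m with synthesis operator Φ (the m×n matrix whose columns are the φ_i). Then max_{i≠j} |⟨φ_i, φ_j⟩| = sqrt((n−m)/(m(n−1))) if and only if ΦΦᵀ = (n/m)·I and |⟨φ_i, φ_j⟩| is constant over all pairs i ≠ j (i.e., the vectors form an equiangular tight frame). -/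
/-! Write `G = ΦᵀΦ`, `T = ΦΦᵀ` and `S = ∑_{i ≠ j} G_ij²`. Since `tr(T²) = tr(G²) = n + S` and
`tr T = n`, expanding `‖T - (n/m)·I‖²_F = tr((T - (n/m)·I)²)` gives
`S = ‖T - (n/m)·I‖²_F + n(n/m - 1) ≥ n(n/m - 1)`. On the other hand `S ≤ n(n - 1) μ²` with
`μ = max_{i ≠ j} |G_ij|`, and `n(n - 1) w² = n(n/m - 1)` for the Welch bound `w`. So `μ = w` forces
both inequalities to be equalities, i.e. `T = (n/m)·I` and `|G_ij| = w` for all `i ≠ j`;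
conversely tightness gives `S = n(n/m - 1)`, and a common value `c` of the `|G_ij|` gives
`S = n(n - 1) c²`, whence `c = w`. -/

open Matrix Finset

theorem Finset.sum_sq_le_card_mul_sq {α : Type*} {s : Finset α} {f : α → ℝ} {w : ℝ}
    (h : ∀ p ∈ s, |f p| ≤ w) : ∑ p ∈ s, f p ^ 2 ≤ #s * w ^ 2 := by
  rw [← nsmul_eq_mul, ← sum_const]
  exact sum_le_sum fun p hp => sq_abs (f p) ▸ pow_le_pow_left₀ (abs_nonneg _) (h p hp) 2

theorem Finset.sum_sq_eq_card_mul_sq_iff {α : Type*} {s : Finset α} {f : α → ℝ} {w : ℝ}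
    (h : ∀ p ∈ s, |f p| ≤ w) : ∑ p ∈ s, f p ^ 2 = #s * w ^ 2 ↔ ∀ p ∈ s, |f p| = w := by
  rw [← nsmul_eq_mul, ← sum_const, sum_eq_sum_iff_of_le fun p hp =>
    sq_abs (f p) ▸ pow_le_pow_left₀ (abs_nonneg _) (h p hp) 2]
  refine forall₂_congr fun p hp => ?_
  rw [← sq_abs, pow_left_inj₀ (abs_nonneg _) ((abs_nonneg _).trans (h p hp)) two_ne_zero]

section OffDiagonal

variable {ι : Type*} [Fintype ι]

theorem Finset.sum_sum_eq_sum_diag_add_sum_offDiag [DecidableEq ι] {M : Type*} [AddCommMonoid M]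
    (f : ι → ι → M) : ∑ i, ∑ j, f i j = ∑ i, f i i + ∑ p ∈ univ.offDiag, f p.1 p.2 := by
  rw [← sum_product', ← diag_union_offDiag, sum_union (disjoint_diag_offDiag _), sum_diag]

theorem Finset.cast_card_offDiag_univ :
    (#(univ : Finset ι).offDiag : ℝ) = Fintype.card ι * (Fintype.card ι - 1) := by
  rw [offDiag_card, card_univ, Nat.cast_sub (Nat.le_mul_self _)]
  push_cast
  ring

theorem isGreatest_abs_offDiag_iff [Nontrivial ι] (f : ι → ι → ℝ) {w : ℝ} (hw : 0 ≤ w)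
    (hlow : #(univ : Finset ι).offDiag * w ^ 2 ≤ ∑ p ∈ univ.offDiag, f p.1 p.2 ^ 2) :
    IsGreatest {x | ∃ i j : ι, i ≠ j ∧ x = |f i j|} w ↔
      ∑ p ∈ univ.offDiag, f p.1 p.2 ^ 2 = #(univ : Finset ι).offDiag * w ^ 2 ∧
        ∃ c, ∀ i j, i ≠ j → |f i j| = c := by
  constructor
  · rintro ⟨-, hmax⟩
    have hle : ∀ p ∈ (univ : Finset ι).offDiag, |f p.1 p.2| ≤ w := fun p hp =>
      hmax ⟨p.1, p.2, (mem_offDiag.1 hp).2.2, rfl⟩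
    have hsum := le_antisymm (sum_sq_le_card_mul_sq hle) hlow
    exact ⟨hsum, w, fun i j hij => (sum_sq_eq_card_mul_sq_iff hle).1 hsum (i, j) (by simp [hij])⟩
  · rintro ⟨hsum, c, hc⟩
    obtain ⟨i₀, j₀, h₀⟩ := exists_pair_ne ι
    have hle : ∀ p ∈ (univ : Finset ι).offDiag, |f p.1 p.2| ≤ c := fun p hp =>
      (hc p.1 p.2 (mem_offDiag.1 hp).2.2).le
    have hcard : (0 : ℝ) < #(univ : Finset ι).offDiag :=
      Nat.cast_pos.2 (card_pos.2 ⟨(i₀, j₀), by simp [h₀]⟩)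
    have hsq : c ^ 2 = w ^ 2 := mul_left_cancel₀ hcard.ne' <| hsum ▸
      ((sum_sq_eq_card_mul_sq_iff hle).2 fun p hp => hc p.1 p.2 (mem_offDiag.1 hp).2.2).symm
    have hcw : c = w :=
      (pow_left_inj₀ (hc i₀ j₀ h₀ ▸ abs_nonneg _) hw two_ne_zero).1 hsq
    subst hcw
    exact ⟨⟨i₀, j₀, h₀, (hc i₀ j₀ h₀).symm⟩, by rintro x ⟨i, j, hij, rfl⟩; exact (hc i j hij).le⟩

end OffDiagonal

namespace Matrix

variable {κ ι : Type*} [Fintype κ] [Fintype ι]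

theorem trace_sub_smul_one_mul_self [DecidableEq κ] {R : Type*} [CommRing R]
    (T : Matrix κ κ R) (a : R) :
    ((T - a • 1) * (T - a • 1)).trace =
      (T * T).trace - 2 * a * T.trace + a ^ 2 * Fintype.card κ := by
  simp only [sub_mul, mul_sub, Matrix.smul_mul, Matrix.mul_smul, Matrix.one_mul, Matrix.mul_one,
    smul_smul, trace_sub, trace_smul, trace_one, smul_eq_mul]
  ring

theorem trace_mul_self_of_isSymm {R : Type*} [CommSemiring R] {G : Matrix ι ι R}
    (hG : G.IsSymm) : (G * G).trace = ∑ i, ∑ j, G i j ^ 2 := by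
  simp only [trace, diag, mul_apply, sq, hG.apply]

theorem trace_mul_transpose_self_eq_zero_iff {A : Matrix κ ι ℝ} :
    (A * Aᵀ).trace = 0 ↔ A = 0 := by
  rw [← conjTranspose_eq_transpose_of_trivial, trace_mul_conjTranspose_self_eq_zero_iff]

theorem trace_mul_transpose_self_nonneg (A : Matrix κ ι ℝ) : 0 ≤ (A * Aᵀ).trace := by
  simpa only [conjTranspose_eq_transpose_of_trivial] using
    (posSemidef_self_mul_conjTranspose A).trace_nonneg

theorem sum_offDiag_transpose_mul_self_sq [DecidableEq κ] [DecidableEq ι] [Nonempty κ]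
    (Φ : Matrix κ ι ℝ) (hunit : ∀ i, (Φᵀ * Φ) i i = 1) :
    ∑ p ∈ univ.offDiag, (Φᵀ * Φ) p.1 p.2 ^ 2 =
      ((Φ * Φᵀ - ((Fintype.card ι : ℝ) / Fintype.card κ) • 1) *
          (Φ * Φᵀ - ((Fintype.card ι : ℝ) / Fintype.card κ) • 1)ᵀ).trace +
        Fintype.card ι * (Fintype.card ι / Fintype.card κ - 1) := by
  have hT : (Φ * Φᵀ).IsSymm := by rw [IsSymm, transpose_mul, transpose_transpose]
  have hG : (Φᵀ * Φ).IsSymm := by rw [IsSymm, transpose_mul, transpose_transpose]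
  have htrace : (Φ * Φᵀ).trace = Fintype.card ι := by
    rw [trace_mul_comm]
    simp [trace, hunit]
  have htrace_sq : (Φ * Φᵀ * (Φ * Φᵀ)).trace =
      Fintype.card ι + ∑ p ∈ univ.offDiag, (Φᵀ * Φ) p.1 p.2 ^ 2 := by
    rw [Matrix.mul_assoc, trace_mul_comm, ← Matrix.mul_assoc, Matrix.mul_assoc,
      trace_mul_self_of_isSymm hG, sum_sum_eq_sum_diag_add_sum_offDiag]
    simp [hunit]
  have hκ : (Fintype.card κ : ℝ) ≠ 0 := Nat.cast_ne_zero.2 Fintype.card_ne_zero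
  rw [transpose_sub, transpose_smul, transpose_one, hT.eq, trace_sub_smul_one_mul_self, htrace,
    htrace_sq]
  field_simp
  ring

end Matrix

/-- Equality in the Welch bound holds iff the unit-norm vectors (the columns of `Φ`)
form an equiangular tight frame: the maximum of `|⟨φ_i, φ_j⟩|` over `i ≠ j` equals
`√((n-m)/(m(n-1)))` iff `ΦΦᵀ = (n/m)·I` and `|⟨φ_i, φ_j⟩|` is constant over `i ≠ j`. -/
theorem welch_equality_iff_ETF (m n : ℕ) (hm : 0 < m) (hmn : m < n)
    (Φ : Matrix (Fin m) (Fin n) ℝ)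
    (hunit : ∀ i, (Φᵀ * Φ) i i = 1) :
    IsGreatest {x : ℝ | ∃ i j : Fin n, i ≠ j ∧ x = |(Φᵀ * Φ) i j|}
        (Real.sqrt (((n : ℝ) - m) / (m * ((n : ℝ) - 1)))) ↔
      (Φ * Φᵀ = ((n : ℝ) / m) • 1 ∧
        ∃ c : ℝ, ∀ i j : Fin n, i ≠ j → |(Φᵀ * Φ) i j| = c) := by
  have : Nontrivial (Fin n) := Fin.nontrivial_iff_two_le.2 (by omega)
  have : Nonempty (Fin m) := ⟨⟨0, hm⟩⟩
  have hpotential := sum_offDiag_transpose_mul_self_sq Φ hunit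
  simp only [Fintype.card_fin] at hpotential
  have hwelch : #(univ : Finset (Fin n)).offDiag *
      Real.sqrt (((n : ℝ) - m) / (m * ((n : ℝ) - 1))) ^ 2 = n * (n / m - 1) := by
    have hm' : (m : ℝ) ≤ n := by exact_mod_cast hmn.le
    have hn' : (1 : ℝ) < n := by exact_mod_cast (by omega : 1 < n)
    rw [cast_card_offDiag_univ, Fintype.card_fin, Real.sq_sqrt
      (div_nonneg (sub_nonneg.2 hm') (mul_nonneg m.cast_nonneg (sub_nonneg.2 hn'.le)))]
    field_simp [(sub_pos.2 hn').ne']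
  rw [isGreatest_abs_offDiag_iff (Φᵀ * Φ) (Real.sqrt_nonneg _)
      (hwelch ▸ hpotential ▸ le_add_of_nonneg_left (trace_mul_transpose_self_nonneg _)),
    hpotential, hwelch, add_eq_right, trace_mul_transpose_self_eq_zero_iff, sub_eq_zero]
end

section
/- Let Φ be the m×n synthesis operator of an equiangular tight frame (so ΦΦᵀ = (n/m)·I, the columns of Φ are unit norm, and |⟨φ_i,φ_j⟩| is constant over i ≠ j), with m < n. Let Φ̃ be any (n−m)×n real matrix whose rows are pairwise orthogonal, each of squared norm n/(n−m), and span the orthogonal complement of the row space of Φ. Then Φ̃ is the synthesis operator of an equiangular tight frame for ℝ^{n−m}, and the Gram matrices satisfy I = (m/n)·ΦᵀΦ + ((n−m)/n)·Φ̃ᵀΦ̃. -/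
open Matrix

/-!
Stack `Φ` and `Ψ` into one square `n × n` matrix `A`. Tightness of both frames and `ΦΨᵀ = 0`
say exactly that `diag(m/n, (n-m)/n) · A · Aᵀ = I`, so `A` is invertible and the product in
the other order, `Aᵀ · diag(m/n, (n-m)/n) · A = (m/n)·ΦᵀΦ + ((n-m)/n)·ΨᵀΨ`, is also `I`.
Reading this identity entrywise, the Gram matrix of `Ψ` is determined by that of `Φ`:
its diagonal is `1` and its off-diagonal entries are `-m/(n-m)` times those of `ΦᵀΦ`.
-/

section ResolutionOfIdentity

variable {K ι κ₁ κ₂ : Type*} [Field K] [Fintype ι] [DecidableEq ι]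
  [Fintype κ₁] [DecidableEq κ₁] [Fintype κ₂] [DecidableEq κ₂]

theorem Matrix.inv_smul_transpose_mul_add_inv_smul_transpose_mul_eq_one
    (hcard : Fintype.card ι = Fintype.card κ₁ + Fintype.card κ₂)
    {Φ : Matrix κ₁ ι K} {Ψ : Matrix κ₂ ι K} {α γ : K} (hα : α ≠ 0) (hγ : γ ≠ 0)
    (hΦ : Φ * Φᵀ = α • 1) (hΨ : Ψ * Ψᵀ = γ • 1) (hΦΨ : Φ * Ψᵀ = 0) :
    α⁻¹ • (Φᵀ * Φ) + γ⁻¹ • (Ψᵀ * Ψ) = 1 := by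
  have hΨΦ : Ψ * Φᵀ = 0 := by simpa only [transpose_mul, transpose_transpose,
    transpose_zero] using congrArg transpose hΦΨ
  have hleft : fromRows (α⁻¹ • Φ) (γ⁻¹ • Ψ) * fromCols Φᵀ Ψᵀ = 1 := by
    rw [fromRows_mul_fromCols, smul_mul, smul_mul, smul_mul, smul_mul, hΦ, hΨ, hΦΨ, hΨΦ,
      smul_smul, smul_smul, inv_mul_cancel₀ hα, inv_mul_cancel₀ hγ, one_smul, one_smul,
      smul_zero, smul_zero, fromBlocks_one]
  have e : ι ≃ κ₁ ⊕ κ₂ := Fintype.equivOfCardEq (by rw [Fintype.card_sum, hcard])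
  rw [← (fromCols_mul_fromRows_eq_one_comm e _ _ _ _).mpr hleft, fromCols_mul_fromRows,
    Matrix.mul_smul, Matrix.mul_smul]

end ResolutionOfIdentity

section ComplementaryGram

variable {K ι : Type*} [Field K] [DecidableEq ι] {G H : Matrix ι ι K} {a b : K}

theorem Matrix.apply_self_eq_one_of_one_eq_smul_add_smul (hab : a + b = 1) (hb : b ≠ 0)
    (h : 1 = a • G + b • H) {i : ι} (hG : G i i = 1) : H i i = 1 := by
  have hii := congrFun (congrFun h i) i
  rw [one_apply_eq, add_apply, smul_apply, smul_apply, hG, smul_eq_mul, smul_eq_mul,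
    mul_one] at hii
  exact mul_left_cancel₀ hb (by linear_combination -hii - hab)

theorem Matrix.apply_eq_neg_div_mul_of_one_eq_smul_add_smul (hb : b ≠ 0)
    (h : 1 = a • G + b • H) {i j : ι} (hij : i ≠ j) : H i j = -(a / b) * G i j := by
  have hij' := congrFun (congrFun h i) j
  rw [one_apply_ne hij, add_apply, smul_apply, smul_apply, smul_eq_mul, smul_eq_mul] at hij'
  field_simp
  linear_combination -hij'

end ComplementaryGram

/-- **Naimark complement.** Let `Φ` be the `m × n` synthesis operator of an ETF
(`ΦΦᵀ = (n/m)·I`, unit-norm columns, equiangular) with `m < n`, and let `Ψ` be an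
`(n-m) × n` matrix whose rows are pairwise orthogonal with squared norm `n/(n-m)`
(i.e. `ΨΨᵀ = (n/(n-m))·I`) and lie in (hence, by dimension count, span) the
orthogonal complement of the row space of `Φ` (i.e. `ΦΨᵀ = 0`).  Then `Ψ` is the
synthesis operator of an ETF for `ℝ^{n-m}` and
`I = (m/n)·ΦᵀΦ + ((n-m)/n)·ΨᵀΨ`. -/
theorem naimark_complement (m n : ℕ) (hm : 0 < m) (hmn : m < n)
    (Φ : Matrix (Fin m) (Fin n) ℝ)
    (hunit : ∀ i, (Φᵀ * Φ) i i = 1)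
    (htight : Φ * Φᵀ = ((n : ℝ) / m) • 1)
    (β : ℝ) (hβ : ∀ i j : Fin n, i ≠ j → |(Φᵀ * Φ) i j| = β)
    (Ψ : Matrix (Fin (n - m)) (Fin n) ℝ)
    (hrows : Ψ * Ψᵀ = ((n : ℝ) / ((n : ℝ) - m)) • 1)
    (hperp : Φ * Ψᵀ = 0) :
    (∀ i, (Ψᵀ * Ψ) i i = 1) ∧
      (∃ c : ℝ, ∀ i j : Fin n, i ≠ j → |(Ψᵀ * Ψ) i j| = c) ∧
      (1 : Matrix (Fin n) (Fin n) ℝ) =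
        ((m : ℝ) / n) • (Φᵀ * Φ) + (((n : ℝ) - m) / n) • (Ψᵀ * Ψ) := by
  have hm₀ : (0 : ℝ) < m := by exact_mod_cast hm
  have hmn' : (m : ℝ) < n := by exact_mod_cast hmn
  have hn₀ : (0 : ℝ) < n := hm₀.trans hmn'
  have hnm₀ : (0 : ℝ) < n - m := sub_pos.mpr hmn'
  have hres : (1 : Matrix (Fin n) (Fin n) ℝ) =
      ((m : ℝ) / n) • (Φᵀ * Φ) + (((n : ℝ) - m) / n) • (Ψᵀ * Ψ) := by
    have h := inv_smul_transpose_mul_add_inv_smul_transpose_mul_eq_one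
      (by simp only [Fintype.card_fin]; omega) (by positivity) (by positivity) htight hrows hperp
    rwa [inv_div, inv_div, eq_comm] at h
  have hsum : (m : ℝ) / n + (n - m) / n = 1 := by field_simp; ring
  have hb : ((n : ℝ) - m) / n ≠ 0 := by positivity
  refine ⟨fun i => apply_self_eq_one_of_one_eq_smul_add_smul hsum hb hres (hunit i),
    ⟨m / (n - m) * β, fun i j hij => ?_⟩, hres⟩
  rw [apply_eq_neg_div_mul_of_one_eq_smul_add_smul hb hres hij, abs_mul, abs_neg, hβ i j hij,
    div_div_div_cancel_right₀ hn₀.ne', abs_of_pos (div_pos hm₀ hnm₀)]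
end

section
/- Let B be the v×v adjacency matrix of an SRG(v,k,λ,μ) with μ = k/2 and k > 0. Set n = v+1, m = ((v+1)/2)·(1 + (v−2k−1)/sqrt((v−2k−1)²+4v)) and β = sqrt((n−m)/(m(n−1))); then β > 0 and the n×n block matrix G = [[1, β𝟏ᵀ],[β𝟏, 2βB + (β+1)I − βJ]] is the Gram matrix of an equiangular tight frame of n = v+1 vectors for ℝ^m; that is, G is symmetric, has unit diagonal, has off-diagonal entries of modulus β, and satisfies G² = (n/m)·G. -/
open Matrix

/-- The `v × v` all-ones matrix `J`. -/
def allOnes (v : ℕ) : Matrix (Fin v) (Fin v) ℝ := Matrix.of fun _ _ => 1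

/-- The `(v+1) × (v+1)` block matrix `[[1, β𝟏ᵀ], [β𝟏, 2βB + (β+1)I - βJ]]`. -/
def blockGram (v : ℕ) (B : Matrix (Fin v) (Fin v) ℝ) (β : ℝ) :
    Matrix (Fin (v + 1)) (Fin (v + 1)) ℝ :=
  Matrix.of fun i j =>
    if hi : i = 0 then (if j = 0 then 1 else β)
    else if hj : j = 0 then β
    else 2 * β * B (i.pred hi) (j.pred hj) + (β + 1) * (if i = j then 1 else 0) - β

set_option maxHeartbeats 1000000 in
/-- **SRG to real ETF.** Let `B` be the adjacency matrix of an `SRG(v,k,λ,μ)` with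
`μ = k/2` and `k > 0`.  With `n = v+1`, `m = ((v+1)/2)(1 + (v-2k-1)/√((v-2k-1)²+4v))`
and `β = √((n-m)/(m(n-1)))`, we have `β > 0` and the block matrix
`G = [[1, β𝟏ᵀ], [β𝟏, 2βB + (β+1)I - βJ]]` is the Gram matrix of an ETF of `n`
vectors for `ℝ^m`: it is symmetric, has unit diagonal, off-diagonal entries of
modulus `β`, and satisfies `G² = (n/m)·G`. -/
theorem srg_to_etf (v : ℕ) (hv : 0 < v)
    (B : Matrix (Fin v) (Fin v) ℝ) (k l : ℝ) (hk : 0 < k)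
    (hsym : B.IsSymm)
    (h01 : ∀ i j, B i j = 0 ∨ B i j = 1)
    (hdiag : ∀ i, B i i = 0)
    (hsrg : B * B = (l - k / 2) • B + (k - k / 2) • 1 + (k / 2) • allOnes v)
    (m : ℝ) (hm : m = (((v : ℝ) + 1) / 2)
      * (1 + ((v : ℝ) - 2 * k - 1) / Real.sqrt (((v : ℝ) - 2 * k - 1) ^ 2 + 4 * v)))
    (β : ℝ) (hβ : β = Real.sqrt (((((v : ℝ) + 1)) - m) / (m * (((v : ℝ) + 1) - 1)))) :
    0 < β ∧ (blockGram v B β).IsSymm ∧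
      (∀ i, blockGram v B β i i = 1) ∧
      (∀ i j : Fin (v + 1), i ≠ j → |blockGram v B β i j| = β) ∧
      blockGram v B β * blockGram v B β = (((v : ℝ) + 1) / m) • blockGram v B β := by
  have hv' : (0:ℝ) < v := by exact_mod_cast hv
  set s : ℝ := Real.sqrt (((v : ℝ) - 2 * k - 1) ^ 2 + 4 * v) with hss
  have hs0 : 0 < s := Real.sqrt_pos.2 (by positivity)
  have hs2 : s ^ 2 = ((v : ℝ) - 2 * k - 1) ^ 2 + 4 * v := Real.sq_sqrt (by positivity)
  have hds : |(v : ℝ) - 2 * k - 1| < s := by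
    rw [hss, ← Real.sqrt_sq_eq_abs]
    exact Real.sqrt_lt_sqrt (sq_nonneg _) (by linarith)
  obtain ⟨hd1, hd2⟩ := abs_lt.1 hds
  have hsd0 : 0 < s + ((v : ℝ) - 2 * k - 1) := by linarith
  have hsd1 : 0 < s - ((v : ℝ) - 2 * k - 1) := by linarith
  have hm2 : m = ((v : ℝ) + 1) * (s + ((v : ℝ) - 2 * k - 1)) / (2 * s) := by
    rw [hm]; field_simp
  have hm0 : 0 < m := by rw [hm2]; positivity
  have hβv : β = (s - ((v : ℝ) - 2 * k - 1)) / (2 * v) := by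
    rw [hβ]
    have harg : (((v : ℝ) + 1) - m) / (m * (((v : ℝ) + 1) - 1))
        = ((s - ((v : ℝ) - 2 * k - 1)) / (2 * v)) ^ 2 := by
      rw [hm2]
      have hmne : ((v : ℝ) + 1) * (s + ((v : ℝ) - 2 * k - 1)) / (2 * s) ≠ 0 := by
        positivity
      field_simp
      rw [add_sub_cancel_right, div_eq_iff hv'.ne']
      linear_combination (-((v:ℝ) * (s - ((v:ℝ) - 2*k - 1)))) * hs2
    rw [harg, Real.sqrt_sq (by positivity)]
  have hβ0 : 0 < β := by rw [hβv]; positivity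
  have hq : (v : ℝ) * β ^ 2 + ((v : ℝ) - 2 * k - 1) * β = 1 := by
    rw [hβv]; field_simp; linear_combination hs2
  have hmn : ((v : ℝ) + 1) / m = 1 + (v : ℝ) * β ^ 2 := by
    rw [hβv, hm2]; field_simp; linear_combination (((v:ℝ)-2*k-1) - s) * hs2
  -- row sums
  have hBij : ∀ i j, B j i = B i j := fun i j => hsym.apply i j
  have hrow : ∀ i, ∑ j, B i j = k := by
    intro i
    have h := congrFun (congrFun hsrg i) i
    rw [Matrix.mul_apply] at h
    have h2 : ∑ j, B i j * B j i = ∑ j, B i j := by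
      refine Finset.sum_congr rfl fun j _ => ?_
      rw [hBij i j]
      rcases h01 i j with h' | h' <;> rw [h'] <;> ring
    rw [h2] at h
    simpa [allOnes, hdiag i, Matrix.one_apply] using h
  have hcol : ∀ j, ∑ i, B i j = k := by
    intro j
    rw [Finset.sum_congr rfl fun i _ => hBij j i]
    exact hrow j
  -- lambda relation
  have hl : 2 * l = 3 * k - (v : ℝ) - 1 := by
    have i0 : Fin v := ⟨0, hv⟩
    have h := congrFun hsrg i0
    have hsum : ∑ j, (B * B) i0 j = k * k := by
      simp only [Matrix.mul_apply]
      rw [Finset.sum_comm]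
      rw [Finset.sum_congr rfl fun p _ => by rw [← Finset.mul_sum, hrow p]]
      rw [← Finset.sum_mul, hrow i0]
    rw [hsrg] at hsum
    simp only [Matrix.add_apply, Matrix.smul_apply, smul_eq_mul, Matrix.one_apply,
      allOnes, Matrix.of_apply] at hsum
    rw [Finset.sum_add_distrib, Finset.sum_add_distrib, ← Finset.mul_sum, hrow i0] at hsum
    simp [Finset.sum_ite_eq, Finset.card_univ, mul_comm] at hsum
    have h2 : k * (2 * l) = k * (3 * k - (v : ℝ) - 1) := by nlinarith [hsum]
    exact mul_left_cancel₀ hk.ne' h2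
  -- entry lemmas
  have e00 : blockGram v B β 0 0 = 1 := by simp [blockGram]
  have e0s : ∀ b : Fin v, blockGram v B β 0 b.succ = β := by
    intro b; simp [blockGram, (Fin.succ_ne_zero b)]
  have es0 : ∀ a : Fin v, blockGram v B β a.succ 0 = β := by
    intro a; simp [blockGram, (Fin.succ_ne_zero a)]
  have ess : ∀ a b : Fin v, blockGram v B β a.succ b.succ
      = 2 * β * B a b + (β + 1) * (if a = b then 1 else 0) - β := by
    intro a b
    simp [blockGram, (Fin.succ_ne_zero a), (Fin.succ_ne_zero b), Fin.succ_inj]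
  refine ⟨hβ0, ?_, ?_, ?_, ?_⟩
  · -- symmetry
    ext i j
    rw [Matrix.transpose_apply]
    rcases Fin.eq_zero_or_eq_succ i with rfl | ⟨a, rfl⟩ <;>
      rcases Fin.eq_zero_or_eq_succ j with rfl | ⟨b, rfl⟩
    · rfl
    · rw [e0s, es0]
    · rw [e0s, es0]
    · rw [ess, ess, hBij a b]
      by_cases h : a = b
      · subst h; rfl
      · rw [if_neg h, if_neg fun h' => h h'.symm]
  · -- unit diagonal
    intro i
    rcases Fin.eq_zero_or_eq_succ i with rfl | ⟨a, rfl⟩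
    · exact e00
    · rw [ess, hdiag a]; simp
  · -- off-diagonal modulus
    intro i j hij
    rcases Fin.eq_zero_or_eq_succ i with rfl | ⟨a, rfl⟩ <;>
      rcases Fin.eq_zero_or_eq_succ j with rfl | ⟨b, rfl⟩
    · exact absurd rfl hij
    · rw [e0s]; exact abs_of_pos hβ0
    · rw [es0]; exact abs_of_pos hβ0
    · have hab : a ≠ b := fun h => hij (by rw [h])
      rw [ess, if_neg hab]
      rcases h01 a b with h' | h' <;> rw [h']
      · simpa using abs_of_pos hβ0
      · rw [show 2 * β * 1 + (β + 1) * 0 - β = β by ring]; exact abs_of_pos hβ0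
  · -- the Gram equation
    ext i j
    rw [Matrix.mul_apply, Matrix.smul_apply, smul_eq_mul, Fin.sum_univ_succ, hmn]
    rcases Fin.eq_zero_or_eq_succ i with rfl | ⟨a, rfl⟩ <;>
      rcases Fin.eq_zero_or_eq_succ j with rfl | ⟨b, rfl⟩
    · simp only [e00, e0s, es0]
      rw [Finset.sum_const, Finset.card_univ, Fintype.card_fin, nsmul_eq_mul]
      push_cast; ring
    · simp only [e00, e0s, es0, ess]
      have key : ∑ q : Fin v, β * (2 * β * B q b + (β + 1) * (if q = b then 1 else 0) - β)
          = 2 * β * β * k + β * (β + 1) - β * β * v := by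
        have hterm : ∀ q : Fin v,
            β * (2 * β * B q b + (β + 1) * (if q = b then 1 else 0) - β)
            = 2 * β * β * B q b + (if q = b then β * (β + 1) else 0) - β * β := by
          intro q; split_ifs <;> ring
        rw [Finset.sum_congr rfl fun q _ => hterm q]
        rw [Finset.sum_sub_distrib, Finset.sum_add_distrib, ← Finset.mul_sum, hcol b,
          Finset.sum_ite_eq' Finset.univ b fun _ => β * (β + 1),
          Finset.sum_const, Finset.card_univ, Fintype.card_fin, nsmul_eq_mul]
        simp only [Finset.mem_univ, if_true]
        ring
      rw [key]
      linear_combination (-β) * hq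
    · simp only [e00, e0s, es0, ess]
      have key : ∑ q : Fin v,
          (2 * β * B a q + (β + 1) * (if a = q then 1 else 0) - β) * β
          = 2 * β * β * k + β * (β + 1) - β * β * v := by
        have hterm : ∀ q : Fin v,
            (2 * β * B a q + (β + 1) * (if a = q then 1 else 0) - β) * β
            = 2 * β * β * B a q + (if a = q then β * (β + 1) else 0) - β * β := by
          intro q; split_ifs <;> ring
        rw [Finset.sum_congr rfl fun q _ => hterm q]
        rw [Finset.sum_sub_distrib, Finset.sum_add_distrib, ← Finset.mul_sum, hrow a,
          Finset.sum_ite_eq Finset.univ a fun _ => β * (β + 1),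
          Finset.sum_const, Finset.card_univ, Fintype.card_fin, nsmul_eq_mul]
        simp only [Finset.mem_univ, if_true]
        ring
      rw [key]
      linear_combination (-β) * hq
    · simp only [e00, e0s, es0, ess]
      have hBB : (B * B) a b
          = (l - k / 2) * B a b + (k - k / 2) * (if a = b then 1 else 0) + k / 2 := by
        rw [hsrg]
        simp [Matrix.add_apply, Matrix.smul_apply, smul_eq_mul, Matrix.one_apply, allOnes]
      have key : ∑ q : Fin v,
          (2 * β * B a q + (β + 1) * (if a = q then 1 else 0) - β)
          * (2 * β * B q b + (β + 1) * (if q = b then 1 else 0) - β)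
          = 4 * β ^ 2 * (B * B) a b + 4 * β * (β + 1) * B a b
            + (β + 1) ^ 2 * (if a = b then 1 else 0)
            - 2 * β * (β + 1) - 4 * β ^ 2 * k + β ^ 2 * v := by
        have hterm : ∀ q : Fin v,
            (2 * β * B a q + (β + 1) * (if a = q then 1 else 0) - β)
            * (2 * β * B q b + (β + 1) * (if q = b then 1 else 0) - β)
            = 4 * β ^ 2 * (B a q * B q b)
              + (if q = b then 2 * β * (β + 1) * B a q else 0)
              + (if a = q then 2 * β * (β + 1) * B q b else 0)
              + (if a = q then (if q = b then (β + 1) ^ 2 else 0) else 0)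
              - 2 * β ^ 2 * B a q - 2 * β ^ 2 * B q b
              - (if a = q then β * (β + 1) else 0)
              - (if q = b then β * (β + 1) else 0) + β ^ 2 := by
          intro q
          split_ifs <;> ring
        rw [Finset.sum_congr rfl fun q _ => hterm q]
        rw [Finset.sum_add_distrib, Finset.sum_sub_distrib, Finset.sum_sub_distrib,
          Finset.sum_sub_distrib, Finset.sum_sub_distrib, Finset.sum_add_distrib,
          Finset.sum_add_distrib, Finset.sum_add_distrib]
        rw [show ∑ q : Fin v, 4 * β ^ 2 * (B a q * B q b) = 4 * β ^ 2 * (B * B) a b by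
          rw [← Finset.mul_sum, Matrix.mul_apply]]
        rw [Finset.sum_ite_eq' Finset.univ b fun q => 2 * β * (β + 1) * B a q]
        rw [Finset.sum_ite_eq Finset.univ a fun q => 2 * β * (β + 1) * B q b]
        rw [Finset.sum_ite_eq Finset.univ a fun q => if q = b then (β + 1) ^ 2 else 0]
        rw [show ∑ q : Fin v, 2 * β ^ 2 * B a q = 2 * β ^ 2 * k by
          rw [← Finset.mul_sum, hrow a]]
        rw [show ∑ q : Fin v, 2 * β ^ 2 * B q b = 2 * β ^ 2 * k by
          rw [← Finset.mul_sum, hcol b]]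
        rw [Finset.sum_ite_eq Finset.univ a fun _ => β * (β + 1)]
        rw [Finset.sum_ite_eq' Finset.univ b fun _ => β * (β + 1)]
        rw [Finset.sum_const, Finset.card_univ, Fintype.card_fin, nsmul_eq_mul]
        simp only [Finset.mem_univ, if_true]
        split_ifs <;> ring
      rw [key, hBB]
      linear_combination (2 * β ^ 2 * B a b) * hl
        + (β - 2 * β * B a b - β * (if a = b then (1:ℝ) else 0)) * hq
end

section
/- Let B be the v×v adjacency matrix of an SRG(v,k,λ,μ) with μ = k/2 and k > 0. Suppose for a positive integer m and some β > 0 the n×n block matrix G = [[1, β𝟏ᵀ],[β𝟏, 2βB + (β+1)I − βJ]], where n = v+1, satisfies G² = (n/m)·G. Then necessarily m = ((v+1)/2)·(1 + (v−2k−1)/sqrt((v−2k−1)²+4v)) and β = sqrt((n−m)/(m(n−1))); in particular, a given such SRG determines the dimension m of the associated real ETF uniquely. -/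
/-!
Only the first row of `G² = (n/m)·G` is needed. Since `B` is a symmetric `0/1` matrix with zero
diagonal, the diagonal of the SRG identity says that every column of `B` sums to `k`. Entry
`(0,0)` then reads `1 + vβ² = n/m` and entry `(0,j)` reads `β(2 + 2kβ + β - vβ) = (n/m)β`;
eliminating `n/m` leaves the quadratic `vβ² + (v-2k-1)β - 1 = 0`, whose only positive root fixes
`β`, and with it `m = n/(1 + vβ²)`.
-/

open Matrix

theorem Matrix.mul_self_apply_self_of_isSymm {ι R : Type*} [Fintype ι] [Semiring R]
    {B : Matrix ι ι R} (hsym : B.IsSymm) (h01 : ∀ i j, B i j = 0 ∨ B i j = 1) (j : ι) :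
    (B * B) j j = ∑ i, B i j := by
  rw [mul_apply]
  refine Finset.sum_congr rfl fun i _ => ?_
  rw [hsym.apply i j]
  rcases h01 i j with h | h <;> simp [h]

theorem sum_apply_eq_of_srg {v : ℕ} {B : Matrix (Fin v) (Fin v) ℝ} {k l μ : ℝ}
    (hsym : B.IsSymm) (h01 : ∀ i j, B i j = 0 ∨ B i j = 1) (hdiag : ∀ i, B i i = 0)
    (hsrg : B * B = (l - μ) • B + (k - μ) • 1 + μ • allOnes v) (j : Fin v) :
    ∑ i, B i j = k := by
  rw [← mul_self_apply_self_of_isSymm hsym h01, hsrg]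
  simp [allOnes, hdiag j]

section blockGram

variable {v : ℕ} (B : Matrix (Fin v) (Fin v) ℝ) (β : ℝ)

@[simp]
theorem blockGram_zero_zero : blockGram v B β 0 0 = 1 := by
  simp [blockGram]

@[simp]
theorem blockGram_zero_succ (j : Fin v) : blockGram v B β 0 j.succ = β := by
  simp [blockGram, Fin.succ_ne_zero]

@[simp]
theorem blockGram_succ_zero (i : Fin v) : blockGram v B β i.succ 0 = β := by
  simp [blockGram, Fin.succ_ne_zero]

@[simp]
theorem blockGram_succ_succ (i j : Fin v) :
    blockGram v B β i.succ j.succ = 2 * β * B i j + (β + 1) * (if i = j then 1 else 0) - β := by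
  simp [blockGram, Fin.succ_ne_zero]

theorem blockGram_mul_self_zero_zero :
    (blockGram v B β * blockGram v B β) 0 0 = 1 + v * β ^ 2 := by
  simp [mul_apply, Fin.sum_univ_succ, sq]

theorem blockGram_mul_self_zero_succ (j : Fin v) :
    (blockGram v B β * blockGram v B β) 0 j.succ
      = β * (2 + 2 * β * ∑ i, B i j + β - v * β) := by
  simp only [mul_apply, Fin.sum_univ_succ, blockGram_zero_zero, blockGram_zero_succ,
    blockGram_succ_succ, mul_sub, mul_add, Finset.sum_sub_distrib, Finset.sum_add_distrib,
    ← Finset.mul_sum, Finset.sum_ite_eq', Finset.mem_univ, if_true, Finset.sum_const,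
    Finset.card_univ, Fintype.card_fin, nsmul_eq_mul]
  ring

theorem one_add_mul_sq_eq_of_blockGram_mul_self {c : ℝ}
    (hGram : blockGram v B β * blockGram v B β = c • blockGram v B β) :
    1 + v * β ^ 2 = c := by
  simpa [blockGram_mul_self_zero_zero] using congrFun (congrFun hGram 0) 0

theorem quadratic_of_blockGram_mul_self {k c : ℝ} (hβ : β ≠ 0) (hv : 0 < v)
    (hcol : ∀ j, ∑ i, B i j = k) (hGram : blockGram v B β * blockGram v B β = c • blockGram v B β) :
    v * β ^ 2 + (v - 2 * k - 1) * β - 1 = 0 := by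
  have hrow := congrFun (congrFun hGram 0) (Fin.succ ⟨0, hv⟩)
  rw [blockGram_mul_self_zero_succ, hcol, Matrix.smul_apply, blockGram_zero_succ, smul_eq_mul,
    ← one_add_mul_sq_eq_of_blockGram_mul_self B β hGram] at hrow
  exact mul_left_cancel₀ hβ (by linear_combination -hrow)

end blockGram

theorem two_mul_mul_eq_sqrt_sub_of_quadratic {a c x : ℝ} (ha : 0 < a) (hx : 0 < x)
    (h : a * x ^ 2 + c * x - 1 = 0) : 2 * a * x = √(c ^ 2 + 4 * a) - c := by
  set s := √(c ^ 2 + 4 * a)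
  have hs : s ^ 2 = c ^ 2 + 4 * a := Real.sq_sqrt (by positivity)
  have hcs : |c| < s := by
    rw [← Real.sqrt_sq_eq_abs]
    exact Real.sqrt_lt_sqrt (sq_nonneg c) (by linarith)
  have hdiscrim : discrim a c (-1) = s * s := by rw [discrim, ← sq, hs]; ring
  have hroot := (quadratic_eq_zero_iff ha.ne' hdiscrim x).1 (by linear_combination h)
  rcases hroot with hx' | hx'
  · rw [hx']; field_simp; ring
  · have : (-c - s) / (2 * a) < 0 :=
      div_neg_of_neg_of_pos (by linarith [neg_abs_le c]) (by positivity)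
    linarith

theorem one_add_mul_sq_mul_eq_one_of_quadratic {a c x : ℝ} (ha : 0 < a) (hx : 0 < x)
    (h : a * x ^ 2 + c * x - 1 = 0) :
    (1 + a * x ^ 2) * ((1 + c / √(c ^ 2 + 4 * a)) / 2) = 1 := by
  have hroot := two_mul_mul_eq_sqrt_sub_of_quadratic ha hx h
  set s := √(c ^ 2 + 4 * a)
  have hs : s ^ 2 = c ^ 2 + 4 * a := Real.sq_sqrt (by positivity)
  have hs0 : 0 < s := Real.sqrt_pos.2 (by positivity)
  have hx' : x = (s - c) / (2 * a) := by field_simp; linarith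
  rw [hx']
  field_simp
  linear_combination (s - c) * hs

theorem srg_determines_etf_dimension_general (v : ℕ) (hv : 0 < v)
    (B : Matrix (Fin v) (Fin v) ℝ) (k l : ℝ)
    (hsym : B.IsSymm)
    (h01 : ∀ i j, B i j = 0 ∨ B i j = 1)
    (hdiag : ∀ i, B i i = 0)
    (hsrg : B * B = (l - k / 2) • B + (k - k / 2) • 1 + (k / 2) • allOnes v)
    (m : ℕ) (β : ℝ) (hβ : 0 < β)
    (hGram : blockGram v B β * blockGram v B β
      = ((((v : ℝ) + 1)) / (m : ℝ)) • blockGram v B β) :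
    (m : ℝ) = (((v : ℝ) + 1) / 2)
        * (1 + ((v : ℝ) - 2 * k - 1) / Real.sqrt (((v : ℝ) - 2 * k - 1) ^ 2 + 4 * v)) ∧
      β = Real.sqrt (((((v : ℝ) + 1)) - m) / ((m : ℝ) * (((v : ℝ) + 1) - 1))) := by
  have hv' : (0 : ℝ) < v := by exact_mod_cast hv
  have hscale := one_add_mul_sq_eq_of_blockGram_mul_self B β hGram
  have hm : (m : ℝ) ≠ 0 := by
    rintro hm
    rw [hm, div_zero] at hscale
    nlinarith
  have hquad := quadratic_of_blockGram_mul_self B β hβ.ne' hv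
    (sum_apply_eq_of_srg hsym h01 hdiag hsrg) hGram
  have hm_eq : (m : ℝ) * (1 + v * β ^ 2) = v + 1 := by
    rw [hscale]
    field_simp
  constructor
  · have := one_add_mul_sq_mul_eq_one_of_quadratic hv' hβ hquad
    linear_combination -(m : ℝ) * this + hm_eq * ((1 + (v - 2 * k - 1) /
      √((v - 2 * k - 1) ^ 2 + 4 * v)) / 2)
  · have hratio : ((v : ℝ) + 1 - m) / (m * ((v : ℝ) + 1 - 1)) = β ^ 2 := by
      rw [add_sub_cancel_right]
      field_simp
      linear_combination -hm_eq
    rw [hratio, Real.sqrt_sq hβ.le]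

/-- **Uniqueness of the ETF dimension.** Let `B` be the adjacency matrix of an
`SRG(v,k,λ,μ)` with `μ = k/2` and `k > 0`.  If for a positive integer `m` and some
`β > 0` the block matrix `G = [[1, β𝟏ᵀ], [β𝟏, 2βB + (β+1)I - βJ]]` satisfies
`G² = (n/m)·G` with `n = v+1`, then necessarily
`m = ((v+1)/2)(1 + (v-2k-1)/√((v-2k-1)²+4v))` and `β = √((n-m)/(m(n-1)))`;
in particular, such an SRG determines the ETF dimension `m` uniquely. -/
theorem srg_determines_etf_dimension (v : ℕ) (hv : 0 < v)
    (B : Matrix (Fin v) (Fin v) ℝ) (k l : ℝ) (hk : 0 < k)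
    (hsym : B.IsSymm)
    (h01 : ∀ i j, B i j = 0 ∨ B i j = 1)
    (hdiag : ∀ i, B i i = 0)
    (hsrg : B * B = (l - k / 2) • B + (k - k / 2) • 1 + (k / 2) • allOnes v)
    (m : ℕ) (hm : 0 < m) (β : ℝ) (hβ : 0 < β)
    (hGram : blockGram v B β * blockGram v B β
      = ((((v : ℝ) + 1)) / (m : ℝ)) • blockGram v B β) :
    (m : ℝ) = (((v : ℝ) + 1) / 2)
        * (1 + ((v : ℝ) - 2 * k - 1) / Real.sqrt (((v : ℝ) - 2 * k - 1) ^ 2 + 4 * v)) ∧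
      β = Real.sqrt (((((v : ℝ) + 1)) - m) / ((m : ℝ) * (((v : ℝ) + 1) - 1))) :=
  srg_determines_etf_dimension_general v hv B k l hsym h01 hdiag hsrg m β hβ hGram
end
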